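/- Let w = s_{i_l}⋯s_{i_1} be a reduced decomposition and let λ(w) be ordered as the sequence α¹ = α_{i_1}, α² = s_{i_1}(α_{i_2}), …, αˡ = s_{i_1}⋯s_{i_{l-1}}(α_{i_l}). If α = αᵃ and β = αᵇ with a < b and γ = α + β is a root, then γ = αᶜ for some index c with a < c < b. -/

import Mathlib

noncomputable section

variable {V : Type} [NormedAddCommGroup V] [InnerProductSpace ℝ V]

/-- Reflection in the hyperplane orthogonal to `α`. -/
def sRefl (α : V) : V → V :=
  fun v => v - ((2 * (inner ℝ v α : ℝ)) / (inner ℝ α α : ℝ)) • α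

lemma sRefl_involutive (α : V) : Function.Involutive (sRefl α) := by
  intro v
  by_cases h : α = 0
  · simp [sRefl, h]
  · have hαα : (inner ℝ α α : ℝ) ≠ 0 := fun hc => h (inner_self_eq_zero.mp hc)
    have key : (inner ℝ (sRefl α v) α : ℝ) = -(inner ℝ v α : ℝ) := by
      simp only [sRefl, inner_sub_left, real_inner_smul_left]
      field_simp
      ring
    have expand : sRefl α (sRefl α v)
        = sRefl α v - ((2 * (inner ℝ (sRefl α v) α : ℝ)) / (inner ℝ α α : ℝ)) • α := rfl
    rw [expand, key]
    have h2 : (2 * -(inner ℝ v α : ℝ)) / (inner ℝ α α : ℝ)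
        = -((2 * (inner ℝ v α : ℝ)) / (inner ℝ α α : ℝ)) := by ring
    rw [h2, neg_smul, sub_neg_eq_add]
    show v - ((2 * (inner ℝ v α : ℝ)) / (inner ℝ α α : ℝ)) • α
        + ((2 * (inner ℝ v α : ℝ)) / (inner ℝ α α : ℝ)) • α = v
    abel

/-- The reflection in `α` as a permutation of `V`. -/
def sReflPerm (α : V) : Equiv.Perm V :=
  Function.Involutive.toPerm (sRefl α) (sRefl_involutive α)

/-- A reduced crystallographic root system with a chosen positive system and base. -/
structure RootSystemData (V : Type) [NormedAddCommGroup V] [InnerProductSpace ℝ V] where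
  R : Finset V
  Rpos : Finset V
  simples : Finset V
  nonzero : (0 : V) ∉ R
  span_top : Submodule.span ℝ (R : Set V) = ⊤
  reduced : ∀ α ∈ R, ∀ t : ℝ, t • α ∈ R → t = 1 ∨ t = -1
  crys : ∀ α ∈ R, ∀ β ∈ R, ∃ n : ℤ, 2 * (inner ℝ β α : ℝ) / (inner ℝ α α : ℝ) = (n : ℝ)
  refl_stable : ∀ α ∈ R, ∀ β ∈ R, sRefl α β ∈ R
  pos_sub : Rpos ⊆ R
  pos_neg : ∀ α ∈ R, (α ∈ Rpos ↔ ¬(-α ∈ Rpos))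
  simples_sub : simples ⊆ Rpos
  simples_indep : LinearIndependent ℝ (fun b : simples => (b : V))
  simples_base : ∀ α ∈ Rpos, ∃ c : V → ℝ,
    (∀ b ∈ simples, 0 ≤ c b) ∧ α = ∑ b ∈ simples, c b • b

/-- The Weyl group, generated by the simple reflections. -/
def WeylGroup (D : RootSystemData V) : Subgroup (Equiv.Perm V) :=
  Subgroup.closure {p | ∃ α ∈ D.simples, p = sReflPerm α}

/-- The length of `w`: the minimal number of simple reflections needed to express `w`. -/
def len (D : RootSystemData V) (w : Equiv.Perm V) : ℕ :=
  sInf {l : ℕ | ∃ ss : List V, (∀ b ∈ ss, b ∈ D.simples) ∧ ss.length = l ∧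
    w = (ss.map sReflPerm).prod}

/-- The λ-set of `w`: positive roots sent to negative roots by `w`. -/
def lam (D : RootSystemData V) (w : Equiv.Perm V) : Set V :=
  {α | α ∈ D.Rpos ∧ -(w α) ∈ D.Rpos}

/-- The λ-sequence attached to a word `ss = [α_{i_l}, …, α_{i_1}]` (the product
being applied right-to-left): its `k`-th entry is `s_{i_1}⋯s_{i_k}(α_{i_{k+1}})`. -/
def lamSeq (ss : List V) : Fin ss.length → V :=
  fun k => (((ss.reverse.take k).map sReflPerm).prod)
    (ss.reverse.get ⟨k, by simp⟩)

/-- `α` is a long root: its squared length is maximal among roots. -/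
def IsLong (D : RootSystemData V) (α : V) : Prop :=
  α ∈ D.R ∧ ∀ β ∈ D.R, (inner ℝ β β : ℝ) ≤ (inner ℝ α α : ℝ)

/-- `α` is a short root: some root is strictly longer. -/
def IsShort (D : RootSystemData V) (α : V) : Prop :=
  α ∈ D.R ∧ ∃ β ∈ D.R, (inner ℝ α α : ℝ) < (inner ℝ β β : ℝ)

/-- The root system has exactly two root lengths. -/
def TwoLengths (D : RootSystemData V) : Prop :=
  Set.ncard {r : ℝ | ∃ α ∈ D.R, (inner ℝ α α : ℝ) = r} = 2

/-- The root system is irreducible: it cannot be split into two nonempty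
mutually orthogonal parts. -/
def RootSystemData.IsIrreducible (D : RootSystemData V) : Prop :=
  ∀ S₁ S₂ : Set V, (↑D.R : Set V) ⊆ S₁ ∪ S₂ →
    (∀ a ∈ S₁, ∀ b ∈ S₂, (inner ℝ a b : ℝ) = 0) →
    (↑D.R : Set V) ⊆ S₁ ∨ (↑D.R : Set V) ⊆ S₂

/-- Product of reflections of a list, first element applied last. -/
def psim (L : List V) : Equiv.Perm V := (L.map sReflPerm).prod

@[simp] lemma psim_nil : psim ([] : List V) = 1 := rfl

@[simp] lemma psim_cons (a : V) (L : List V) :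
    psim (a :: L) = sReflPerm a * psim L := by
  simp [psim]

lemma psim_append (L₁ L₂ : List V) : psim (L₁ ++ L₂) = psim L₁ * psim L₂ := by
  simp [psim]

lemma sReflPerm_apply (α v : V) : sReflPerm α v = sRefl α v := rfl

lemma sReflPerm_mul_self (α : V) : sReflPerm α * sReflPerm α = 1 := by
  ext v
  exact sRefl_involutive α v

lemma sReflPerm_inv (α : V) : (sReflPerm α)⁻¹ = sReflPerm α :=
  inv_eq_of_mul_eq_one_right (sReflPerm_mul_self α)

lemma psim_inv (L : List V) : (psim L)⁻¹ = psim L.reverse := by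
  induction L with
  | nil => simp
  | cons a L ih => simp [psim_append, mul_inv_rev, ih, sReflPerm_inv]

lemma sRefl_add (α u v : V) : sRefl α (u + v) = sRefl α u + sRefl α v := by
  simp only [sRefl, inner_add_left, mul_add, add_div, add_smul]
  abel

lemma sRefl_smul (α : V) (c : ℝ) (u : V) : sRefl α (c • u) = c • sRefl α u := by
  simp only [sRefl, real_inner_smul_left, smul_sub, smul_smul]
  congr 1
  rw [mul_div_assoc, mul_div_assoc]
  ring_nf

lemma sRefl_inner (α u v : V) :
    (inner ℝ (sRefl α u) (sRefl α v) : ℝ) = (inner ℝ u v : ℝ) := by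
  by_cases h : α = 0
  · simp [sRefl, h]
  · have hA : (inner ℝ α α : ℝ) ≠ 0 := fun hc => h (inner_self_eq_zero.mp hc)
    simp only [sRefl, inner_sub_left, inner_sub_right, real_inner_smul_left,
      real_inner_smul_right]
    rw [real_inner_comm α u, real_inner_comm α v] at *
    field_simp
    ring_nf

lemma psim_add (L : List V) (u v : V) : psim L (u + v) = psim L u + psim L v := by
  induction L with
  | nil => simp
  | cons a L ih => simp [Equiv.Perm.mul_apply, ih, sReflPerm_apply, sRefl_add]

lemma psim_smul (L : List V) (c : ℝ) (u : V) : psim L (c • u) = c • psim L u := by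
  induction L with
  | nil => simp
  | cons a L ih => simp [Equiv.Perm.mul_apply, ih, sReflPerm_apply, sRefl_smul]

lemma psim_neg (L : List V) (u : V) : psim L (-u) = -psim L u := by
  have := psim_smul L (-1) u
  simpa using this

lemma psim_sub (L : List V) (u v : V) : psim L (u - v) = psim L u - psim L v := by
  rw [sub_eq_add_neg, sub_eq_add_neg, psim_add, psim_neg]

lemma psim_inner (L : List V) (u v : V) :
    (inner ℝ (psim L u) (psim L v) : ℝ) = (inner ℝ u v : ℝ) := by
  induction L with
  | nil => simp
  | cons a L ih => simp [Equiv.Perm.mul_apply, sReflPerm_apply, sRefl_inner, ih]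
lemma sRefl_psim_apply (L : List V) (α v : V) :
    sRefl (psim L α) (psim L v) = psim L (sRefl α v) := by
  simp only [sRefl, psim_inner, psim_sub, psim_smul]

lemma sReflPerm_psim (L : List V) (α : V) :
    sReflPerm (psim L α) = psim L * sReflPerm α * (psim L)⁻¹ := by
  ext v
  have h1 : v = psim L ((psim L)⁻¹ v) := (Equiv.apply_symm_apply (psim L) v).symm
  calc sReflPerm (psim L α) v = sRefl (psim L α) (psim L ((psim L)⁻¹ v)) := by
        rw [← h1]; rfl
    _ = psim L (sRefl α ((psim L)⁻¹ v)) := sRefl_psim_apply L α _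
    _ = (psim L * sReflPerm α * (psim L)⁻¹) v := rfl

variable (D : RootSystemData V)

lemma mem_R_ne_zero {α : V} (h : α ∈ D.R) : α ≠ 0 := fun hc => D.nonzero (hc ▸ h)

lemma sRefl_self {α : V} (h : α ∈ D.R) : sRefl α α = -α := by
  have hA : (inner ℝ α α : ℝ) ≠ 0 := fun hc =>
    mem_R_ne_zero D h (inner_self_eq_zero.mp hc)
  simp only [sRefl]
  rw [mul_div_assoc, div_self hA, mul_one, two_smul]
  abel

lemma neg_mem_R {α : V} (h : α ∈ D.R) : -α ∈ D.R := by
  have := D.refl_stable α h α h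
  rwa [sRefl_self D h] at this

lemma psim_mem_R {L : List V} (hL : ∀ b ∈ L, b ∈ D.R) {u : V} (hu : u ∈ D.R) :
    psim L u ∈ D.R := by
  induction L with
  | nil => simpa
  | cons a L ih =>
    have := D.refl_stable a (hL a (by simp)) (psim L u) (ih (fun b hb => hL b (by simp [hb])))
    simpa [Equiv.Perm.mul_apply, sReflPerm_apply] using this

lemma pos_total {α : V} (h : α ∈ D.R) (hn : α ∉ D.Rpos) : -α ∈ D.Rpos := by
  by_contra hc
  exact hn ((D.pos_neg α h).mpr hc)

/-- coefficient extraction from linear independence of simples -/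
lemma coeff_zero (f : V → ℝ) (h : (∑ b ∈ D.simples, f b • b) = 0) :
    ∀ b ∈ D.simples, f b = 0 := by
  have h' : (∑ b ∈ D.simples.attach, f b • (b : V)) = 0 := by
    rwa [Finset.sum_attach D.simples (fun b => f b • b)]
  have h2 : (∑ b : {x // x ∈ D.simples}, (fun b : {x // x ∈ D.simples} => f b) b • (b : V)) = 0 := by
    rwa [← Finset.sum_attach D.simples (fun b => f b • b)] at h
  intro b hb
  have := Fintype.linearIndependent_iff.mp D.simples_indep
    (fun b : {x // x ∈ D.simples} => f b) h2 ⟨b, hb⟩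
  exact this
open scoped Classical in
lemma simple_refl_pos {α β : V} (hα : α ∈ D.simples) (hβ : β ∈ D.Rpos)
    (hne : β ≠ α) : sRefl α β ∈ D.Rpos := by
  have hαR : α ∈ D.R := D.pos_sub (D.simples_sub hα)
  have hβR : β ∈ D.R := D.pos_sub hβ
  have hmem : sRefl α β ∈ D.R := D.refl_stable α hαR β hβR
  by_contra hneg
  have hnegpos : -(sRefl α β) ∈ D.Rpos := pos_total D hmem hneg
  obtain ⟨c, hc0, hcs⟩ := D.simples_base β hβ
  obtain ⟨d, hd0, hds⟩ := D.simples_base _ hnegpos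
  set n : ℝ := (2 * (inner ℝ β α : ℝ)) / (inner ℝ α α : ℝ) with hn
  have hrefl : sRefl α β = β - n • α := rfl
  have key : (∑ b ∈ D.simples, c b • b) + (∑ b ∈ D.simples, d b • b) - n • α = 0 := by
    rw [← hcs, ← hds, hrefl]; abel
  have hsum : (∑ b ∈ D.simples, (if b = α then n else 0) • b) = n • α := by
    have : ∀ b ∈ D.simples, (if b = α then n else 0) • b = if b = α then n • b else 0 := by
      intro b _; split <;> simp
    rw [Finset.sum_congr rfl this, Finset.sum_ite_eq' D.simples α (fun b => n • b)]
    simp [hα]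
  have hzero : (∑ b ∈ D.simples, (c b + d b - (if b = α then n else 0)) • b) = 0 := by
    simp only [sub_smul, add_smul, Finset.sum_sub_distrib, Finset.sum_add_distrib]
    rw [hsum]
    exact key
  have hco := coeff_zero D _ hzero
  have hβeq : β = c α • α := by
    rw [hcs]
    rw [Finset.sum_eq_single α]
    · intro b hb hbne
      have := hco b hb
      simp [hbne] at this
      have hcb : c b = 0 := by
        have h1 := hc0 b hb
        have h2 := hd0 b hb
        linarith
      simp [hcb]
    · intro hb
      exact absurd hα hb
  have := D.reduced α hαR (c α) (hβeq ▸ hβR)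
  rcases this with h1 | h1
  · exact hne (by rw [hβeq, h1, one_smul])
  · have hβneg : β = -α := by rw [hβeq, h1]; simp
    have := (D.pos_neg α hαR).mp (D.simples_sub hα)
    exact this (hβneg ▸ hβ)

lemma sum3_ne {x y z : V} (hx : x ∈ D.Rpos) (hy : y ∈ D.Rpos) (hz : z ∈ D.Rpos) :
    x + y + z ≠ 0 := by
  intro h
  obtain ⟨c, hc0, hcs⟩ := D.simples_base x hx
  obtain ⟨d, hd0, hds⟩ := D.simples_base y hy
  obtain ⟨e, he0, hes⟩ := D.simples_base z hz
  have hzero : (∑ b ∈ D.simples, (c b + d b + e b) • b) = 0 := by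
    simp only [add_smul, Finset.sum_add_distrib]
    rw [← hcs, ← hds, ← hes, h]
  have hco := coeff_zero D _ hzero
  have hx0 : x = 0 := by
    rw [hcs]
    apply Finset.sum_eq_zero
    intro b hb
    have := hco b hb
    have h1 := hc0 b hb; have h2 := hd0 b hb; have h3 := he0 b hb
    have : c b = 0 := by linarith
    simp [this]
  exact mem_R_ne_zero D (D.pos_sub hx) hx0

lemma pos_add_mem {x y : V} (hx : x ∈ D.Rpos) (hy : y ∈ D.Rpos)
    (hR : x + y ∈ D.R) : x + y ∈ D.Rpos := by
  by_contra h
  have := pos_total D hR h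
  exact sum3_ne D hx hy this (by abel)
lemma exchangeE : ∀ (k : ℕ) (t : List V), (∀ b ∈ t, b ∈ D.simples) →
    ∀ (h : k < t.length), psim (t.take k) t[k] ∉ D.Rpos →
    ∃ u : List V, (∀ b ∈ u, b ∈ D.simples) ∧ u.length + 2 = k + 1 ∧
      psim u = psim (t.take (k + 1)) := by
  intro k
  induction k with
  | zero =>
    intro t ht h hneg
    exfalso
    apply hneg
    have : psim (t.take 0) t[0] = t[0] := by simp
    rw [this]
    exact D.simples_sub (ht _ (List.getElem_mem h))
  | succ k ih =>
    intro t ht h hneg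
    match t, h with
    | a :: t', h =>
    have hk : k < t'.length := by simpa using h
    have ha : a ∈ D.simples := ht a (by simp)
    have ht' : ∀ b ∈ t', b ∈ D.simples := fun b hb => ht b (List.mem_cons_of_mem a hb)
    have hδ : psim ((a::t').take (k+1)) (a::t')[k+1] = sRefl a (psim (t'.take k) t'[k]) := by
      simp [List.take_succ_cons, psim_cons, Equiv.Perm.mul_apply, sReflPerm_apply,
        List.getElem_cons_succ]
    by_cases hpos : psim (t'.take k) t'[k] ∈ D.Rpos
    · have heq : psim (t'.take k) t'[k] = a := by
        by_contra hne
        exact hneg (hδ ▸ simple_refl_pos D ha hpos hne)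
      refine ⟨t'.take k, ?_, ?_, ?_⟩
      · intro b hb; exact ht' b (List.mem_of_mem_take hb)
      · simp [List.length_take]; omega
      · have ht1 : (a::t').take (k+1+1) = a :: (t'.take k ++ [t'[k]]) := by
          rw [List.take_succ_cons, ← List.take_concat_get (l := t') (i := k) hk]
          simp [List.concat_eq_append]
        rw [ht1, psim_cons, psim_append]
        have hconj := sReflPerm_psim (t'.take k) (t'[k])
        rw [heq] at hconj
        rw [hconj]
        have hs1 : psim [t'[k]] = sReflPerm t'[k] := by simp [psim]
        rw [hs1]
        have habs : ∀ (q s : Equiv.Perm V), s * s = 1 → (q * s * q⁻¹) * (q * s) = q := by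
          intro q s hs
          have h2 : (q * s * q⁻¹) * (q * s) = q * (s * s) := by group
          rw [h2, hs, mul_one]
        exact (habs _ _ (sReflPerm_mul_self _)).symm
    · obtain ⟨u', hu'mem, hu'len, hu'eq⟩ := ih t' ht' hk hpos
      refine ⟨a :: u', ?_, ?_, ?_⟩
      · intro b hb
        rcases List.mem_cons.mp hb with hb | hb
        · exact hb ▸ ha
        · exact hu'mem b hb
      · simp; omega
      · rw [List.take_succ_cons, psim_cons, psim_cons, hu'eq]

lemma pos_entries (t : List V) (ht : ∀ b ∈ t, b ∈ D.simples)
    (hmin : ∀ u : List V, (∀ b ∈ u, b ∈ D.simples) → psim u = psim t → t.length ≤ u.length) :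
    ∀ (k : ℕ) (h : k < t.length), psim (t.take k) t[k] ∈ D.Rpos := by
  intro k h
  by_contra hneg
  obtain ⟨u, humem, hulen, hueq⟩ := exchangeE D k t ht h hneg
  set t' := u ++ t.drop (k+1) with ht'
  have hmem' : ∀ b ∈ t', b ∈ D.simples := by
    intro b hb
    rcases List.mem_append.mp hb with hb | hb
    · exact humem b hb
    · exact ht b (List.mem_of_mem_drop hb)
  have heq' : psim t' = psim t := by
    rw [ht', psim_append, hueq, ← psim_append, List.take_append_drop]
  have := hmin t' hmem' heq'
  have hlen' : t'.length = u.length + (t.length - (k+1)) := by simp [ht']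
  omega

lemma lam_entry (t : List V) (ht : ∀ b ∈ t, b ∈ D.simples) (γ : V)
    (hγ : γ ∈ D.Rpos) (hneg : (psim t)⁻¹ γ ∉ D.Rpos) :
    ∃ (k : ℕ) (h : k < t.length), psim (t.take k) t[k] = γ := by
  induction t generalizing γ with
  | nil => simp at hneg; exact absurd hγ hneg
  | cons a t' ih =>
    have ha : a ∈ D.simples := ht a (by simp)
    have ht' : ∀ b ∈ t', b ∈ D.simples := fun b hb => ht b (List.mem_cons_of_mem a hb)
    have hsplit : (psim (a :: t'))⁻¹ γ = (psim t')⁻¹ (sRefl a γ) := by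
      rw [psim_cons, mul_inv_rev, sReflPerm_inv]
      rfl
    by_cases hpos : sRefl a γ ∈ D.Rpos
    · obtain ⟨k, hk, hkeq⟩ := ih ht' (sRefl a γ) hpos (by rw [← hsplit]; exact hneg)
      refine ⟨k + 1, by simpa using Nat.succ_lt_succ hk, ?_⟩
      rw [List.take_succ_cons, psim_cons, List.getElem_cons_succ]
      show sRefl a (psim (t'.take k) t'[k]) = γ
      rw [hkeq]
      exact sRefl_involutive a γ
    · have : γ = a := by
        by_contra hne
        exact hpos (simple_refl_pos D ha hγ hne)
      exact ⟨0, by simp, by simpa using this.symm⟩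
lemma psim_singleton (x : V) : psim [x] = sReflPerm x := by simp [psim]

lemma psim_split (u : List V) (j : ℕ) (hj : j < u.length) :
    psim u = psim (u.take j) * sReflPerm (u[j]'hj) * psim (u.drop (j+1)) := by
  have hsplit : u = (u.take j ++ [u[j]'hj]) ++ u.drop (j+1) := by
    conv_lhs => rw [← List.take_append_drop (j+1) u]
    congr 1
    rw [← List.take_concat_get (l := u) (i := j) hj, List.concat_eq_append]
  conv_lhs => rw [hsplit]
  rw [psim_append, psim_append, psim_singleton]

lemma inv_entry (u : List V) (hu : ∀ b ∈ u, b ∈ D.R) (j : ℕ) (hj : j < u.length) :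
    (psim u)⁻¹ (psim (u.take j) (u[j]'hj)) =
      - psim ((u.drop (j+1)).reverse) (u[j]'hj) := by
  rw [psim_split u j hj]
  rw [mul_inv_rev, mul_inv_rev, sReflPerm_inv]
  have h1 : (psim (u.take j))⁻¹ (psim (u.take j) (u[j]'hj)) = u[j]'hj :=
    Equiv.symm_apply_apply _ _
  have h2 : sReflPerm (u[j]'hj) (u[j]'hj) = -(u[j]'hj) :=
    sRefl_self D (hu _ (List.getElem_mem hj))
  show (psim (u.drop (j+1)))⁻¹ (sReflPerm (u[j]'hj) ((psim (u.take j))⁻¹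
      (psim (u.take j) (u[j]'hj)))) = _
  rw [h1, h2, psim_inv, psim_neg]
theorem sum_appears_between (D : RootSystemData V) (w : Equiv.Perm V) (ss : List V)
    (hmem : ∀ b ∈ ss, b ∈ D.simples)
    (hw : w = (ss.map sReflPerm).prod)
    (hred : ss.length = len D w)
    (a b : Fin ss.length) (hab : a < b)
    (hroot : lamSeq ss a + lamSeq ss b ∈ D.R) :
    ∃ c : Fin ss.length, a < c ∧ c < b ∧
      lamSeq ss c = lamSeq ss a + lamSeq ss b := by
  classical
  set t := ss.reverse with htdef
  have hlen : t.length = ss.length := List.length_reverse (as := ss)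
  have htmem : ∀ x ∈ t, x ∈ D.simples := fun x hx => hmem x (List.mem_reverse.mp hx)
  have hwt : (psim t)⁻¹ = w := by
    rw [psim_inv, htdef, List.reverse_reverse]; exact hw.symm
  have hminT : ∀ u : List V, (∀ x ∈ u, x ∈ D.simples) → psim u = psim t →
      t.length ≤ u.length := by
    intro u humem hueq
    have hwu : w = (u.reverse.map sReflPerm).prod := by
      show w = psim u.reverse
      rw [← psim_inv u, hueq, hwt]
    have hle : len D w ≤ u.reverse.length :=
      Nat.sInf_le ⟨u.reverse, fun x hx => humem x (List.mem_reverse.mp hx), rfl, hwu⟩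
    rw [hlen, hred]
    simpa using hle
  have hAB : (a : ℕ) < (b : ℕ) := hab
  have hBlt : (b : ℕ) < t.length := by rw [hlen]; exact b.2
  set A := (a : ℕ) with hA
  obtain ⟨m, hABm⟩ : ∃ m : ℕ, A + m = (b : ℕ) := ⟨(b : ℕ) - A, by omega⟩
  have hm1 : 1 ≤ m := by omega
  set t₂ := (t.drop A).take (m+1) with ht₂
  have ht₂len : t₂.length = m + 1 := by
    rw [ht₂, List.length_take, List.length_drop]; omega
  have ht0 : 0 < t₂.length := by omega
  have htm : m < t₂.length := by omega
  have ht₂mem : ∀ x ∈ t₂, x ∈ D.simples := fun x hx =>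
    htmem x (List.mem_of_mem_drop (List.mem_of_mem_take hx))
  have ht₂R : ∀ x ∈ t₂, x ∈ D.R := fun x hx => D.pos_sub (D.simples_sub (ht₂mem x hx))
  -- subword entry identity
  have hsub : ∀ (j : ℕ) (hj : j ≤ m),
      psim (t.take (A+j)) (t[A+j]'(by omega)) =
        psim (t.take A) (psim (t₂.take j) (t₂[j]'(by omega))) := by
    intro j hj
    rw [List.take_add, psim_append, Equiv.Perm.mul_apply]
    congr 1
    have e1 : t₂.take j = (t.drop A).take j := by
      rw [ht₂, List.take_take, min_eq_left (by omega)]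
    have e2 : t₂[j]'(by omega) = t[A+j]'(by omega) := by
      show ((t.drop A).take (m+1))[j]'(by rw [List.length_take, List.length_drop]; omega) = _
      rw [List.getElem_take, List.getElem_drop]
    rw [e1, e2]
  have hβ0 : t₂[0]'ht0 ∈ D.Rpos := D.simples_sub (ht₂mem _ (List.getElem_mem ht0))
  -- minimality of subword
  have hminT₂ : ∀ u : List V, (∀ x ∈ u, x ∈ D.simples) → psim u = psim t₂ →
      t₂.length ≤ u.length := by
    intro u humem hueq
    have hdropsplit : t.drop A = t₂ ++ t.drop (A+(m+1)) := by
      rw [ht₂]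
      conv_lhs => rw [← List.take_append_drop (m+1) (t.drop A)]
      rw [List.drop_drop]
    have hT : t = t.take A ++ t₂ ++ t.drop (A+(m+1)) := by
      conv_lhs => rw [← List.take_append_drop A t]
      rw [hdropsplit, List.append_assoc]
    have hmem' : ∀ x ∈ t.take A ++ u ++ t.drop (A+(m+1)), x ∈ D.simples := by
      intro x hx
      rcases List.mem_append.mp hx with hx | hx
      · rcases List.mem_append.mp hx with hx | hx
        · exact htmem x (List.mem_of_mem_take hx)
        · exact humem x hx
      · exact htmem x (List.mem_of_mem_drop hx)
    have heq' : psim (t.take A ++ u ++ t.drop (A+(m+1))) = psim t := by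
      conv_rhs => rw [hT]
      rw [psim_append, psim_append, psim_append, psim_append, hueq]
    have hge := hminT _ hmem' heq'
    simp only [List.length_append, List.length_take, List.length_drop] at hge
    rw [ht₂len]
    omega
  have hβm : psim (t₂.take m) (t₂[m]'htm) ∈ D.Rpos :=
    pos_entries D t₂ ht₂mem hminT₂ m htm
  -- relate lamSeq to subword entries
  have hgc : ∀ (i j : ℕ) (hi : i < t.length) (hj : j < t.length), i = j →
      psim (t.take i) (t[i]'hi) = psim (t.take j) (t[j]'hj) := by
    intro i j hi hj h
    subst h
    rfl
  have hla : lamSeq ss a = psim (t.take A) (t₂[0]'ht0) := by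
    have h0 := hsub 0 (by omega)
    have hstep : lamSeq ss a = psim (t.take (A+0)) (t[A+0]'(by omega)) := by
      show psim (t.take A) (t.get ⟨A, by rw [hlen]; exact a.2⟩) = _
      rw [List.get_eq_getElem]
      exact hgc A (A+0) (by omega) (by omega) (by omega)
    rw [hstep, h0]
    rfl
  have hlb : lamSeq ss b = psim (t.take A) (psim (t₂.take m) (t₂[m]'htm)) := by
    have h0 := hsub m (by omega)
    have hstep : lamSeq ss b = psim (t.take (A+m)) (t[A+m]'(by omega)) := by
      show psim (t.take (b:ℕ)) (t.get ⟨(b:ℕ), by rw [hlen]; exact b.2⟩) = _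
      rw [List.get_eq_getElem]
      exact hgc (b:ℕ) (A+m) (by omega) (by omega) (by omega)
    rw [hstep, h0]
  -- γ' = t₂[0] + βm is a positive root
  have hpβ : psim (t.take A) (t₂[0]'ht0 + psim (t₂.take m) (t₂[m]'htm)) =
      lamSeq ss a + lamSeq ss b := by
    rw [psim_add, ← hla, ← hlb]
  have hγ'R : t₂[0]'ht0 + psim (t₂.take m) (t₂[m]'htm) ∈ D.R := by
    have hinv : (psim (t.take A))⁻¹ (lamSeq ss a + lamSeq ss b) =
        t₂[0]'ht0 + psim (t₂.take m) (t₂[m]'htm) := by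
      rw [← hpβ]
      exact Equiv.symm_apply_apply _ _
    rw [← hinv, psim_inv]
    exact psim_mem_R D (fun x hx => D.pos_sub (D.simples_sub (htmem x
      (List.mem_of_mem_take (List.mem_reverse.mp hx))))) hroot
  have hγ'pos : t₂[0]'ht0 + psim (t₂.take m) (t₂[m]'htm) ∈ D.Rpos :=
    pos_add_mem D hβ0 hβm hγ'R
  -- negativity of (psim t₂)⁻¹ γ'
  have hYpos : t₂[m]'htm ∈ D.Rpos := D.simples_sub (ht₂mem _ (List.getElem_mem htm))
  have hXpos : psim ((t₂.drop 1).reverse) (t₂[0]'ht0) ∈ D.Rpos := by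
    set u' := (t₂.drop 1).reverse ++ [t₂[0]'ht0] with hu'
    have hu'len : u'.length = m + 1 := by
      rw [hu', List.length_append, List.length_reverse, List.length_drop]
      simp; omega
    have hu'mem : ∀ x ∈ u', x ∈ D.simples := by
      intro x hx
      rcases List.mem_append.mp hx with hx | hx
      · exact ht₂mem x (List.mem_of_mem_drop (List.mem_reverse.mp hx))
      · rcases List.mem_singleton.mp hx with rfl
        exact ht₂mem _ (List.getElem_mem ht0)
    have htake1 : t₂.take 1 = [t₂[0]'ht0] := by
      rw [← List.take_concat_get (l := t₂) (i := 0) ht0]; rfl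
    have hhead : t₂ = [t₂[0]'ht0] ++ t₂.drop 1 := by
      conv_lhs => rw [← List.take_append_drop 1 t₂]
      rw [htake1]
    have hu'eq : psim u' = (psim t₂)⁻¹ := by
      have h1 : psim t₂ = sReflPerm (t₂[0]'ht0) * psim (t₂.drop 1) := by
        conv_lhs => rw [hhead]
        rw [psim_append, psim_singleton]
      rw [hu', psim_append, psim_singleton, h1, mul_inv_rev, sReflPerm_inv, psim_inv]
    have hminU' : ∀ v : List V, (∀ x ∈ v, x ∈ D.simples) → psim v = psim u' →
        u'.length ≤ v.length := by
      intro v hv hveq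
      have hrev : psim v.reverse = psim t₂ := by
        rw [← psim_inv, hveq, hu'eq, inv_inv]
      have h2 := hminT₂ v.reverse (fun x hx => hv x (List.mem_reverse.mp hx)) hrev
      rw [List.length_reverse] at h2
      omega
    have hXe := pos_entries D u' hu'mem hminU' m (by omega)
    have e1 : u'.take m = (t₂.drop 1).reverse := by
      rw [hu']
      rw [List.take_append_of_le_length (by simp [List.length_reverse]; omega)]
      rw [List.take_of_length_le (by simp [List.length_reverse]; omega)]
    have e2 : u'[m]'(by omega) = t₂[0]'ht0 := by
      show ((t₂.drop 1).reverse ++ [t₂[0]'ht0])[m]'(by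
        simp only [List.length_append, List.length_reverse, List.length_drop,
          List.length_singleton]; omega) = _
      rw [List.getElem_append_right (by
        simp only [List.length_reverse, List.length_drop]; omega)]
      simp
    rwa [e1, e2] at hXe
  have hneg2 : (psim t₂)⁻¹ (t₂[0]'ht0 + psim (t₂.take m) (t₂[m]'htm)) ∉ D.Rpos := by
    have i0 := inv_entry D t₂ ht₂R 0 ht0
    simp only [List.take_zero, psim_nil, Equiv.Perm.one_apply] at i0
    have im := inv_entry D t₂ ht₂R m htm
    have hdropm : t₂.drop (m+1) = [] := List.drop_eq_nil_of_le (by omega)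
    rw [hdropm] at im
    simp only [List.reverse_nil, psim_nil, Equiv.Perm.one_apply] at im
    intro hcon
    have hadd : (psim t₂)⁻¹ (t₂[0]'ht0 + psim (t₂.take m) (t₂[m]'htm)) =
        -(psim ((t₂.drop 1).reverse) (t₂[0]'ht0) + t₂[m]'htm) := by
      rw [psim_inv] at i0 im ⊢
      rw [psim_add, i0, im, neg_add]
    rw [hadd] at hcon
    have h0 : psim ((t₂.drop 1).reverse) (t₂[0]'ht0) + t₂[m]'htm +
        -(psim ((t₂.drop 1).reverse) (t₂[0]'ht0) + t₂[m]'htm) = 0 := by abel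
    exact sum3_ne D hXpos hYpos hcon h0
  obtain ⟨k, hk, hkeq⟩ := lam_entry D t₂ ht₂mem _ hγ'pos hneg2
  have hkm1 : k < m + 1 := by rw [← ht₂len]; exact hk
  have hk0 : k ≠ 0 := by
    intro h0
    subst h0
    simp only [List.take_zero, psim_nil, Equiv.Perm.one_apply] at hkeq
    have hz : psim (t₂.take m) (t₂[m]'htm) = 0 := by
      have := hkeq.symm
      rwa [add_eq_left] at this
    exact mem_R_ne_zero D (D.pos_sub hβm) hz
  have hkm : k ≠ m := by
    intro h0
    subst h0
    have hz : t₂[0]'ht0 = 0 := by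
      have := hkeq.symm
      rwa [add_eq_right] at this
    exact mem_R_ne_zero D (D.pos_sub hβ0) hz
  refine ⟨⟨A + k, by omega⟩, ?_, ?_, ?_⟩
  · rw [Fin.lt_def]
    show A < A + k
    omega
  · rw [Fin.lt_def]
    show A + k < (b : ℕ)
    omega
  · have hc : lamSeq ss ⟨A + k, by omega⟩ = psim (t.take (A+k)) (t[A+k]'(by omega)) := by
      show psim (t.take (A+k)) (t.get ⟨A+k, by omega⟩) = _
      simp [List.get_eq_getElem]
    rw [hc, hsub k (by omega), hkeq, hpβ]

end
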